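/- Let h⁻¹ be a positive definite quadratic form on ℝ^{n-1}, β ∈ ℝ^{n-1}, N > 0, ν > 0. A necessary condition for a nonzero ξ ∈ ℝ^{n-1} to satisfy (τ(ν² - N²) - ⟨β,ξ⟩ν²)² = ν²N²(⟨β,ξ⟩² + h⁻¹(ξ,ξ)(ν² - N²)) for some real τ is ⟨β,ξ⟩²/h⁻¹(ξ,ξ) ≥ N² - ν². In particular, by Cauchy–Schwarz (h(β,β) ≥ ⟨β,ξ⟩²/h⁻¹(ξ,ξ) for all ξ ≠ 0, where h is the dual form), solvability for some nonzero ξ forces h(β,β) ≥ N² - ν², i.e. ν² ≥ N² - |β|²_h. -/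
import Mathlib


/-- Necessary condition for a point of the double characteristic variety over ξ ≠ 0:
⟨β,ξ⟩²/h⁻¹(ξ,ξ) ≥ N² - ν², and hence (by Cauchy–Schwarz) h(β,β) ≥ N² - ν². -/
theorem stmt_4 (n : ℕ) (N ν : ℝ) (hN : 0 < N) (hν : 0 < ν)
    (hinv : (Fin n → ℝ) → ℝ) (pair : (Fin n → ℝ) → ℝ) (hββ : ℝ)
    (hpos : ∀ ξ : Fin n → ℝ, ξ ≠ 0 → 0 < hinv ξ)
    (hCS : ∀ ξ : Fin n → ℝ, ξ ≠ 0 → (pair ξ) ^ 2 / hinv ξ ≤ hββ)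
    (ξ : Fin n → ℝ) (hξ : ξ ≠ 0)
    (hsol : ∃ τ : ℝ, (τ * (ν ^ 2 - N ^ 2) - pair ξ * ν ^ 2) ^ 2 =
        ν ^ 2 * N ^ 2 * ((pair ξ) ^ 2 + hinv ξ * (ν ^ 2 - N ^ 2))) :
    N ^ 2 - ν ^ 2 ≤ (pair ξ) ^ 2 / hinv ξ ∧ N ^ 2 - ν ^ 2 ≤ hββ := by
  obtain ⟨τ, hτ⟩ := hsol
  have hH := hpos ξ hξ
  have hprod : (0:ℝ) < ν ^ 2 * N ^ 2 := by positivity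
  have hnn : 0 ≤ (pair ξ) ^ 2 + hinv ξ * (ν ^ 2 - N ^ 2) := by
    nlinarith [sq_nonneg (τ * (ν ^ 2 - N ^ 2) - pair ξ * ν ^ 2)]
  have h1 : N ^ 2 - ν ^ 2 ≤ (pair ξ) ^ 2 / hinv ξ := by
    rw [le_div_iff₀ hH]; nlinarith
  exact ⟨h1, h1.trans (hCS ξ hξ)⟩
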